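/- arXiv:2601.16271 — 6 statements merged into one kernel-verified Lean document; each statement's English description precedes it below -/
import Mathlib

section
/- For every 2×2 real matrix A there exists a diagonal matrix D with diagonal entries in {-1, 1} such that |det(A + D)| ≥ 1. -/
theorem stmt_1 (A : Matrix (Fin 2) (Fin 2) ℝ) :
    ∃ d : Fin 2 → ℝ, (∀ i, d i = -1 ∨ d i = 1) ∧
      1 ≤ |(A + Matrix.diagonal d).det| := by
  by_contra h
  push_neg at h
  have h1 := h ![1, 1] (by intro i; fin_cases i <;> simp)
  have h2 := h ![-1, -1] (by intro i; fin_cases i <;> simp)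
  have h3 := h ![1, -1] (by intro i; fin_cases i <;> simp)
  have h4 := h ![-1, 1] (by intro i; fin_cases i <;> simp)
  simp only [Matrix.det_fin_two, Matrix.add_apply, Matrix.diagonal_apply,
    Matrix.cons_val', Matrix.cons_val_zero, Matrix.cons_val_one, Matrix.head_cons,
    Matrix.empty_val', Matrix.cons_val_fin_one, if_pos rfl, abs_lt] at h1 h2 h3 h4
  norm_num at h1 h2 h3 h4
  obtain ⟨a1, b1⟩ := h1
  obtain ⟨a2, b2⟩ := h2
  obtain ⟨a3, b3⟩ := h3
  obtain ⟨a4, b4⟩ := h4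
  linarith
end

section
/- For every n×n real matrix A there exists a diagonal matrix D with diagonal entries in {-1, 1} such that |det(A + D)| ≥ 1. -/
open Matrix

lemma key_diff (n : ℕ) (A : Matrix (Fin (n+1)) (Fin (n+1)) ℝ) (d' : Fin n → ℝ) :
    (A + diagonal (Fin.cons 1 d')).det - (A + diagonal (Fin.cons (-1) d')).det
      = 2 * (A.submatrix Fin.succ Fin.succ + diagonal d').det := by
  set M := A + diagonal (Fin.cons (-1 : ℝ) d') with hM
  have h1 : A + diagonal (Fin.cons (1:ℝ) d')
      = M.updateRow 0 (M 0 + Pi.single 0 2) := by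
    ext i j
    by_cases hi : i = 0
    · subst hi
      by_cases hj : j = 0
      · subst hj
        simp [M, Matrix.updateRow_self, Matrix.add_apply, diagonal_apply, Pi.single_apply]
        ring
      · simp [M, Matrix.updateRow_self, Matrix.add_apply, diagonal_apply,
          Pi.single_apply, Ne.symm hj, hj]
    · simp only [Matrix.updateRow_ne hi, Matrix.add_apply, M]
      congr 1
      rcases Fin.eq_zero_or_eq_succ i with h | ⟨k, rfl⟩
      · exact absurd h hi
      · by_cases hj : (Fin.succ k) = j <;> simp [diagonal_apply, hj]
        subst hj; simp
  have h2 : M.det = (M.updateRow 0 (M 0)).det := by rw [Matrix.updateRow_eq_self]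
  rw [h1, ← Matrix.updateRow_eq_self M 0]
  rw [Matrix.det_updateRow_add]
  rw [Matrix.updateRow_eq_self]
  ring_nf
  have hsingle : (Pi.single (0 : Fin (n+1)) (2:ℝ) : Fin (n+1) → ℝ) = (2:ℝ) • (Pi.single 0 1 : Fin (n+1) → ℝ) := by
    ext j; simp [Pi.single_apply]
  rw [hsingle, Matrix.det_updateRow_smul]
  set N := M.updateRow 0 (Pi.single 0 (1:ℝ)) with hN
  have hdet : N.det = (N.submatrix Fin.succ Fin.succ).det := by
    rw [Matrix.det_succ_row_zero]
    rw [Fintype.sum_eq_single (0 : Fin (n+1))]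
    · simp [N, Matrix.updateRow_self, Fin.succAbove_zero]
    · intro j hj
      simp [N, Matrix.updateRow_self, Pi.single_apply, Ne.symm hj]
  have hsub : N.submatrix Fin.succ Fin.succ
      = A.submatrix Fin.succ Fin.succ + diagonal d' := by
    ext i j
    simp [N, M, Matrix.updateRow_ne (Fin.succ_ne_zero i), Matrix.add_apply,
      diagonal_apply, Fin.succ_inj]
  have hupd : (M.updateRow 0 (M 0)).updateRow 0 (Pi.single 0 (1:ℝ)) = N := by
    ext i j
    by_cases hi : i = 0 <;> simp [hN, Matrix.updateRow_apply, hi]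
  rw [hupd, hdet, hsub]
  ring

theorem stmt_2 (n : ℕ) (A : Matrix (Fin n) (Fin n) ℝ) :
    ∃ d : Fin n → ℝ, (∀ i, d i = -1 ∨ d i = 1) ∧
      1 ≤ |(A + Matrix.diagonal d).det| := by
  induction n with
  | zero =>
      refine ⟨fun i => 1, fun i => i.elim0, ?_⟩
      simp [Matrix.det_fin_zero]
  | succ n ih =>
      obtain ⟨d', hd', hdet'⟩ := ih (A.submatrix Fin.succ Fin.succ)
      have hkey := key_diff n A d'
      set x := (A + diagonal (Fin.cons (1:ℝ) d')).det
      set y := (A + diagonal (Fin.cons (-1:ℝ) d')).det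
      have h2 : 2 ≤ |x - y| := by
        rw [hkey, abs_mul]
        calc (2:ℝ) = 2 * 1 := by ring
        _ ≤ |2| * |(A.submatrix Fin.succ Fin.succ + diagonal d').det| := by
            rw [abs_two]; nlinarith
      have hmax : 1 ≤ |x| ∨ 1 ≤ |y| := by
        by_contra h
        push_neg at h
        have h3 : |x - y| ≤ |x| + |y| := abs_sub x y
        linarith [h.1, h.2]
      rcases hmax with h | h
      · exact ⟨Fin.cons 1 d', fun i => Fin.cases (Or.inr rfl) (fun k => hd' k) i, h⟩
      · exact ⟨Fin.cons (-1) d', fun i => Fin.cases (Or.inl rfl) (fun k => hd' k) i, h⟩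
end

section
/- For every n×n real matrix A there exists a diagonal matrix D with diagonal entries in {-1, 1} such that -1 is not an eigenvalue of DA, i.e., det(DA + I) ≠ 0. -/
theorem stmt_3 (n : ℕ) (A : Matrix (Fin n) (Fin n) ℝ) :
    ∃ d : Fin n → ℝ, (∀ i, d i = -1 ∨ d i = 1) ∧
      (Matrix.diagonal d * A + 1).det ≠ 0 := by
  set F : (Fin n → ℝ) → ℝ := fun d => (Matrix.diagonal d * A + 1).det with hF
  have hM : ∀ (d : Fin n → ℝ) (i : Fin n) (c : ℝ),
      Matrix.diagonal (Function.update d i c) * A + 1 =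
        Matrix.updateRow (Matrix.diagonal d * A + 1) i
          (c • A i + fun j => (1 : Matrix (Fin n) (Fin n) ℝ) i j) := by
    intro d i c
    ext j k
    by_cases h : j = i
    · subst h
      simp [Matrix.diagonal_mul, Matrix.updateRow_self]
    · simp [Matrix.updateRow_ne h, Matrix.diagonal_mul, Function.update_of_ne h]
  have key : ∀ (d : Fin n → ℝ) (i : Fin n),
      F (Function.update d i 1) + F (Function.update d i (-1)) =
        2 * F (Function.update d i 0) := by
    intro d i
    simp only [hF, hM]
    have e1 : ((1:ℝ) • A i + fun j => (1 : Matrix (Fin n) (Fin n) ℝ) i j)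
        = A i + fun j => (1 : Matrix (Fin n) (Fin n) ℝ) i j := by simp
    have e2 : ((-1:ℝ) • A i + fun j => (1 : Matrix (Fin n) (Fin n) ℝ) i j)
        = ((-1:ℝ) • A i) + fun j => (1 : Matrix (Fin n) (Fin n) ℝ) i j := rfl
    have e3 : ((0:ℝ) • A i + fun j => (1 : Matrix (Fin n) (Fin n) ℝ) i j)
        = fun j => (1 : Matrix (Fin n) (Fin n) ℝ) i j := by simp
    rw [e1, e2, e3, Matrix.det_updateRow_add, Matrix.det_updateRow_add,
      Matrix.det_updateRow_smul]
    ring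
  have claim : ∀ s : Finset (Fin n), ∀ d : Fin n → ℝ, (∀ i ∈ s, d i = 0) →
      F d ≠ 0 → ∃ d', (∀ i ∈ s, d' i = -1 ∨ d' i = 1) ∧
        (∀ i ∉ s, d' i = d i) ∧ F d' ≠ 0 := by
    intro s
    induction s using Finset.induction_on with
    | empty => exact fun d _ hFd => ⟨d, by simp, fun i _ => rfl, hFd⟩
    | @insert a s ha ih =>
      intro d hd0 hFd
      have hda : d a = 0 := hd0 a (Finset.mem_insert_self a s)
      have hupd : Function.update d a 0 = d := by
        rw [← hda]; exact Function.update_eq_self a d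
      have hsum : F (Function.update d a 1) + F (Function.update d a (-1)) = 2 * F d := by
        rw [key d a, hupd]
      have : ∃ c : ℝ, (c = -1 ∨ c = 1) ∧ F (Function.update d a c) ≠ 0 := by
        by_contra h
        push_neg at h
        have h1 := h 1 (Or.inr rfl)
        have h2 := h (-1) (Or.inl rfl)
        rw [h1, h2] at hsum
        have : F d = 0 := by linarith
        exact hFd this
      obtain ⟨c, hc, hFc⟩ := this
      have hz : ∀ i ∈ s, Function.update d a c i = 0 := by
        intro i hi
        have hia : i ≠ a := fun h => ha (h ▸ hi)
        rw [Function.update_of_ne hia]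
        exact hd0 i (Finset.mem_insert_of_mem hi)
      obtain ⟨d', hd'1, hd'2, hd'3⟩ := ih (Function.update d a c) hz hFc
      refine ⟨d', ?_, ?_, hd'3⟩
      · intro i hi
        rcases Finset.mem_insert.mp hi with h | h
        · subst h
          rw [hd'2 i ha, Function.update_self]
          exact hc
        · exact hd'1 i h
      · intro i hi
        have hia : i ≠ a := fun h => hi (h ▸ Finset.mem_insert_self a s)
        have his : i ∉ s := fun h => hi (Finset.mem_insert_of_mem h)
        rw [hd'2 i his, Function.update_of_ne hia]
  obtain ⟨d', h1, _, h3⟩ := claim Finset.univ (fun _ => 0) (fun _ _ => rfl) (by simp [hF])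
  exact ⟨d', fun i => h1 i (Finset.mem_univ i), h3⟩
end

section
/- Every real orthogonal n×n matrix U admits a representation U = D(I - S)(I + S)⁻¹ where D is a diagonal matrix with diagonal entries in {-1, 1} and S is skew-symmetric. -/
open Matrix Finset

lemma sum_det_signs (n : ℕ) (U : Matrix (Fin n) (Fin n) ℝ) :
    ∑ d ∈ Fintype.piFinset (fun _ : Fin n => ({-1, 1} : Finset ℝ)),
      (Matrix.diagonal d + U).det = 2 ^ n * U.det := by
  simp_rw [Matrix.det_apply]
  rw [Finset.sum_comm]
  rw [Finset.mul_sum]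
  refine Finset.sum_congr rfl fun σ _ => ?_
  have key : ∀ d ∈ Fintype.piFinset (fun _ : Fin n => ({-1, 1} : Finset ℝ)),
      (∏ i, (Matrix.diagonal d + U) (σ i) i)
        = ∏ i, ((if σ i = i then d i else 0) + U (σ i) i) := by
    intro d _
    refine Finset.prod_congr rfl fun i _ => ?_
    simp [Matrix.diagonal, Matrix.add_apply, Matrix.of_apply]
    split_ifs with h
    · rw [h]
    · ring
  rw [Finset.sum_congr rfl fun d hd => congrArg _ (key d hd), ← Finset.smul_sum,
    (Finset.prod_univ_sum (fun _ : Fin n => ({-1, 1} : Finset ℝ))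
      (fun i y => (if σ i = i then y else 0) + U (σ i) i)).symm]
  have : ∀ i : Fin n, (∑ x ∈ ({-1, 1} : Finset ℝ), ((if σ i = i then x else 0) + U (σ i) i))
      = 2 * U (σ i) i := by
    intro i
    rw [Finset.sum_pair (by norm_num)]
    split_ifs <;> ring
  rw [Finset.prod_congr rfl fun i _ => this i, Finset.prod_mul_distrib]
  simp [smul_mul_assoc, mul_smul_comm, mul_comm]

lemma exists_sign (n : ℕ) (U : Matrix (Fin n) (Fin n) ℝ) (hdet : U.det ≠ 0) :
    ∃ d : Fin n → ℝ, (∀ i, d i = -1 ∨ d i = 1) ∧ (Matrix.diagonal d + U).det ≠ 0 := by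
  by_contra h
  push_neg at h
  have hz : ∑ d ∈ Fintype.piFinset (fun _ : Fin n => ({-1, 1} : Finset ℝ)),
      (Matrix.diagonal d + U).det = 0 := by
    refine Finset.sum_eq_zero fun d hd => ?_
    rw [Fintype.mem_piFinset] at hd
    exact h d fun i => by have := hd i; simpa using this
  rw [sum_det_signs] at hz
  exact hdet ((mul_eq_zero.mp hz).resolve_left (by positivity))

theorem stmt_7 (n : ℕ) (U : Matrix (Fin n) (Fin n) ℝ) (hU : Uᵀ * U = 1) :
    ∃ (d : Fin n → ℝ) (S : Matrix (Fin n) (Fin n) ℝ),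
      (∀ i, d i = -1 ∨ d i = 1) ∧ Sᵀ = -S ∧
      U = Matrix.diagonal d * ((1 - S) * (1 + S)⁻¹) := by
  have hdetU : U.det * U.det = 1 := by
    have := congrArg Matrix.det hU
    rwa [Matrix.det_mul, Matrix.det_transpose, Matrix.det_one] at this
  have hdU : U.det ≠ 0 := by
    intro h; rw [h] at hdetU; norm_num at hdetU
  obtain ⟨d, hd, hdet⟩ := exists_sign n U hdU
  set D := Matrix.diagonal d with hD
  have hDD : D * D = 1 := by
    have hdd : d * d = 1 := by
      funext i
      rcases hd i with h | h <;> simp [h]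
    rw [hD, Matrix.diagonal_mul_diagonal, show (fun i => d i * d i) = d * d from rfl,
      hdd]
    exact Matrix.diagonal_one
  set V := D * U with hV
  have hVo : Vᵀ * V = 1 := by
    rw [hV, Matrix.transpose_mul, hD, Matrix.diagonal_transpose, ← hD]
    calc Uᵀ * D * (D * U) = Uᵀ * (D * D) * U := by noncomm_ring
      _ = 1 := by rw [hDD, Matrix.mul_one, hU]
  have hVV : V * Vᵀ = 1 := mul_eq_one_comm.mp hVo
  have h1V : (1 + V) = D * (D + U) := by
    rw [Matrix.mul_add, hDD, hV]
  have hdet1V : (1 + V).det ≠ 0 := by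
    rw [h1V, Matrix.det_mul]
    have hDdet : D.det ≠ 0 := by
      rw [hD, Matrix.det_diagonal]
      exact Finset.prod_ne_zero_iff.mpr fun i _ => by rcases hd i with h | h <;> simp [h]
    exact mul_ne_zero hDdet hdet
  have hunit : IsUnit (1 + V).det := isUnit_iff_ne_zero.mpr hdet1V
  have hinv : (1 + V) * (1 + V)⁻¹ = 1 := Matrix.mul_nonsing_inv _ hunit
  have hinv' : (1 + V)⁻¹ * (1 + V) = 1 := Matrix.nonsing_inv_mul _ hunit
  set S := (1 - V) * (1 + V)⁻¹ with hS
  -- commutation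
  have hcomm : (1 - V) * (1 + V) = (1 + V) * (1 - V) := by noncomm_ring
  have e1 : (1 + V)⁻¹ * ((1 - V) * (1 + V)) * (1 + V)⁻¹ = (1 + V)⁻¹ * (1 - V) := by
    rw [← Matrix.mul_assoc, Matrix.mul_assoc ((1 + V)⁻¹ * (1 - V)) (1 + V) (1 + V)⁻¹,
      hinv, Matrix.mul_one]
  have e2 : (1 + V)⁻¹ * ((1 + V) * (1 - V)) * (1 + V)⁻¹ = (1 - V) * (1 + V)⁻¹ := by
    rw [← Matrix.mul_assoc, hinv', Matrix.one_mul]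
  have hScomm : S = (1 + V)⁻¹ * (1 - V) := by
    rw [hS, ← e2, ← hcomm, e1]
  have hVtunit : IsUnit (Vᵀ).det := by
    apply isUnit_iff_ne_zero.mpr
    intro h
    have := congrArg Matrix.det hVo
    rw [Matrix.det_mul, h, Matrix.det_one] at this
    norm_num at this
  have hskew : Sᵀ = -S := by
    have h1 : (1 + V)ᵀ = Vᵀ * (1 + V) := by
      rw [Matrix.transpose_add, Matrix.transpose_one, Matrix.mul_add, Matrix.mul_one, hVo]
      abel
    have h2 : (1 - V)ᵀ = Vᵀ * (V - 1) := by
      rw [Matrix.transpose_sub, Matrix.transpose_one, Matrix.mul_sub, Matrix.mul_one, hVo]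
    rw [hS, Matrix.transpose_mul, Matrix.transpose_nonsing_inv, h1, h2,
      Matrix.mul_inv_rev]
    calc (1 + V)⁻¹ * (Vᵀ)⁻¹ * (Vᵀ * (V - 1))
        = (1 + V)⁻¹ * ((Vᵀ)⁻¹ * Vᵀ) * (V - 1) := by noncomm_ring
      _ = (1 + V)⁻¹ * (V - 1) := by
          rw [Matrix.nonsing_inv_mul _ hVtunit, Matrix.mul_one]
      _ = -((1 + V)⁻¹ * (1 - V)) := by noncomm_ring
      _ = -S := by rw [hScomm]
  have h1S : 1 + S = (2 : ℝ) • (1 + V)⁻¹ := by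
    calc 1 + S = (1 + V) * (1 + V)⁻¹ + (1 - V) * (1 + V)⁻¹ := by rw [hinv, hS]
      _ = ((1 + V) + (1 - V)) * (1 + V)⁻¹ := (Matrix.add_mul _ _ _).symm
      _ = ((2 : ℝ) • 1) * (1 + V)⁻¹ := by congr 1; module
      _ = (2 : ℝ) • (1 + V)⁻¹ := by rw [Matrix.smul_mul, Matrix.one_mul]
  have h1Sinv : (1 + S)⁻¹ = (2 : ℝ)⁻¹ • (1 + V) := by
    apply Matrix.inv_eq_right_inv
    rw [h1S, Matrix.smul_mul, Matrix.mul_smul, smul_smul]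
    norm_num [hinv']
  have h1mS : 1 - S = ((2 : ℝ) • V) * (1 + V)⁻¹ := by
    calc 1 - S = (1 + V) * (1 + V)⁻¹ - (1 - V) * (1 + V)⁻¹ := by rw [hinv, hS]
      _ = ((1 + V) - (1 - V)) * (1 + V)⁻¹ := (Matrix.sub_mul _ _ _).symm
      _ = ((2 : ℝ) • V) * (1 + V)⁻¹ := by congr 1; module
  refine ⟨d, S, hd, hskew, ?_⟩
  have hres : (1 - S) * (1 + S)⁻¹ = V := by
    rw [h1mS, h1Sinv, Matrix.mul_smul, Matrix.smul_mul, Matrix.smul_mul, smul_smul,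
      Matrix.mul_assoc, hinv', Matrix.mul_one]
    norm_num
  rw [hres, hV, ← Matrix.mul_assoc, hDD, Matrix.one_mul]
end

section
/- Let U be a real orthogonal n×n matrix with |det(U + I)| ≥ 1. Then every complex eigenvalue of (U + I)⁻¹ has absolute value at most 2^(n-1). -/
open Matrix Polynomial

lemma eval_charpoly_aux {m : Type*} [Fintype m] [DecidableEq m] {R : Type*} [CommRing R]
    (M : Matrix m m R) (t : R) : (M.charpoly).eval t = (t • (1 : Matrix m m R) - M).det := by
  rw [Matrix.charpoly, ← Polynomial.coe_evalRingHom, RingHom.map_det]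
  congr 1
  ext i j
  by_cases h : i = j <;>
    simp [h, charmatrix_apply, Matrix.one_apply, Matrix.smul_apply]

lemma multiset_prod_le_pow_card_aux {s : Multiset ℝ} {c : ℝ}
    (h : ∀ x ∈ s, 0 ≤ x ∧ x ≤ c) : s.prod ≤ c ^ Multiset.card s := by
  induction s using Multiset.induction with
  | empty => simp
  | cons a t ih =>
    simp only [Multiset.prod_cons, Multiset.card_cons, pow_succ]
    have ha := h a (Multiset.mem_cons_self a t)
    have ht : ∀ x ∈ t, 0 ≤ x ∧ x ≤ c := fun x hx => h x (Multiset.mem_cons_of_mem hx)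
    have hprod0 : 0 ≤ t.prod := Multiset.prod_nonneg (fun x hx => (ht x hx).1)
    have hc : 0 ≤ c := le_trans ha.1 ha.2
    calc a * t.prod ≤ c * t.prod := mul_le_mul_of_nonneg_right ha.2 hprod0
      _ ≤ c * c ^ Multiset.card t := mul_le_mul_of_nonneg_left (ih ht) hc
      _ = c ^ Multiset.card t * c := mul_comm _ _

lemma abs_eq_one_aux {m : Type*} [Fintype m] [DecidableEq m] (M : Matrix m m ℂ)
    (hM : Mᴴ * M = 1) (c : ℂ) (v : m → ℂ) (hv : v ≠ 0) (h : M *ᵥ v = c • v) :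
    ‖c‖ = 1 := by
  have key : (star c * c) * (star v ⬝ᵥ v) = star v ⬝ᵥ v := by
    have h1 : star (M *ᵥ v) ⬝ᵥ (M *ᵥ v) = star v ⬝ᵥ v := by
      rw [star_mulVec, dotProduct_mulVec, vecMul_vecMul, hM, vecMul_one]
    have h2 : star (M *ᵥ v) ⬝ᵥ (M *ᵥ v) = (star c * c) * (star v ⬝ᵥ v) := by
      rw [h, star_smul, smul_dotProduct, dotProduct_smul]
      simp [mul_assoc]
    rw [← h2, h1]
  have hd : star v ⬝ᵥ v ≠ 0 := by
    have hre : (star v ⬝ᵥ v) = ((∑ i, Complex.normSq (v i) : ℝ) : ℂ) := by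
      push_cast
      simp only [dotProduct, Pi.star_apply]
      refine Finset.sum_congr rfl fun i _ => ?_
      rw [Complex.star_def, ← Complex.normSq_eq_conj_mul_self]
    obtain ⟨i, hi⟩ := Function.ne_iff.mp hv
    have hpos : 0 < ∑ i, Complex.normSq (v i) :=
      Finset.sum_pos' (fun j _ => Complex.normSq_nonneg _)
        ⟨i, Finset.mem_univ i, Complex.normSq_pos.mpr hi⟩
    rw [hre]
    exact_mod_cast ne_of_gt hpos
  have hc : star c * c = 1 := mul_right_cancel₀ hd (key.trans (one_mul _).symm)
  rw [Complex.star_def, ← Complex.normSq_eq_conj_mul_self] at hc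
  have hns' : Complex.normSq c = 1 := by exact_mod_cast hc
  have := Complex.sq_norm c
  nlinarith [norm_nonneg c]

theorem stmt_10 (n : ℕ) (U : Matrix (Fin n) (Fin n) ℝ)
    (hU : Uᵀ * U = 1) (hdet : 1 ≤ |(U + 1).det|)
    (lam : ℂ) (hlam : (Matrix.charpoly ((U + 1)⁻¹.map (algebraMap ℝ ℂ))).IsRoot lam) :
    ‖lam‖ ≤ 2 ^ (n - 1) := by
  rcases Nat.eq_zero_or_pos n with hn | hn
  · subst hn
    exfalso
    simp [Polynomial.IsRoot, Matrix.charpoly, Matrix.det_isEmpty] at hlam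
  rcases eq_or_ne lam 0 with hl0 | hl0
  · subst hl0; simp only [norm_zero]; positivity
  set f := algebraMap ℝ ℂ with hf
  set A := (U + 1).map f with hAdef
  have hdet0 : (U + 1).det ≠ 0 := by
    intro h; rw [h] at hdet; simp at hdet; linarith
  have hdetA : A.det = f ((U + 1).det) := (RingHom.map_det f _).symm
  have hfcoe : f ((U + 1).det) = (((U + 1).det : ℝ) : ℂ) := by rw [hf]; rfl
  have hAdet0 : A.det ≠ 0 := by
    rw [hdetA, hfcoe]
    exact_mod_cast hdet0
  have hUnit : IsUnit (U + 1).det := isUnit_iff_ne_zero.mpr hdet0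
  have hAUnit : IsUnit A.det := isUnit_iff_ne_zero.mpr hAdet0
  have hinv : (U + 1)⁻¹.map f = A⁻¹ := by
    refine (Matrix.inv_eq_left_inv ?_).symm
    rw [← Matrix.map_mul, Matrix.nonsing_inv_mul _ hUnit, Matrix.map_one _ (map_zero f) (map_one f)]
  rw [hinv] at hlam
  rw [Polynomial.IsRoot, eval_charpoly_aux] at hlam
  set μ := lam⁻¹ with hμdef
  have hmu0 : μ ≠ 0 := inv_ne_zero hl0
  have hAinvA : A⁻¹ * A = 1 := Matrix.nonsing_inv_mul _ hAUnit
  have hfac : (lam • A⁻¹) * (μ • (1 : Matrix (Fin n) (Fin n) ℂ) - A)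
      = -(lam • (1 : Matrix (Fin n) (Fin n) ℂ) - A⁻¹) := by
    rw [Matrix.smul_mul, Matrix.mul_sub, Matrix.mul_smul, mul_one, hAinvA, smul_sub, smul_smul,
      mul_inv_cancel₀ hl0, one_smul, neg_sub]
  have hdetsub : (μ • (1 : Matrix (Fin n) (Fin n) ℂ) - A).det = 0 := by
    have h1 := congrArg Matrix.det hfac
    rw [Matrix.det_mul, Matrix.det_neg, hlam, mul_zero] at h1
    have h2 : (lam • A⁻¹).det ≠ 0 := by
      rw [Matrix.det_smul, Matrix.det_nonsing_inv, Ring.inverse_eq_inv']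
      exact mul_ne_zero (pow_ne_zero _ hl0) (inv_ne_zero hAdet0)
    exact (mul_eq_zero.mp h1).resolve_left h2
  have hroot : (A.charpoly).IsRoot μ := by
    rw [Polynomial.IsRoot, eval_charpoly_aux]; exact hdetsub
  have hne : A.charpoly ≠ 0 := (Matrix.charpoly_monic A).ne_zero
  have hmem : μ ∈ A.charpoly.roots := by
    rw [Polynomial.mem_roots hne]; exact hroot
  have hcard : Multiset.card A.charpoly.roots = n := by
    rw [(Polynomial.splits_iff_card_roots).mp (IsAlgClosed.splits A.charpoly),
      Matrix.charpoly_natDegree_eq_dim, Fintype.card_fin]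
  have hprod : A.det = A.charpoly.roots.prod := Matrix.det_eq_prod_roots_charpoly A
  have hcons : A.charpoly.roots = μ ::ₘ A.charpoly.roots.erase μ := (Multiset.cons_erase hmem).symm
  -- every root has absolute value at most 2
  have habs_bound : ∀ ρ ∈ A.charpoly.roots, ‖ρ‖ ≤ 2 := by
    intro ρ hρ
    have hρr : (A.charpoly).IsRoot ρ := (Polynomial.mem_roots hne).mp hρ
    rw [Polynomial.IsRoot, eval_charpoly_aux] at hρr
    obtain ⟨v, hv, hveq⟩ := (Matrix.exists_mulVec_eq_zero_iff).mpr hρr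
    have hAv : A *ᵥ v = ρ • v := by
      rw [Matrix.sub_mulVec, smul_mulVec, one_mulVec, sub_eq_zero] at hveq
      exact hveq.symm
    have hA1 : A = U.map f + 1 := by
      ext i j
      by_cases h : i = j <;>
        simp [hAdef, hf, Matrix.map_apply, Matrix.add_apply, Matrix.one_apply, h]
    have hUv : (U.map f) *ᵥ v = (ρ - 1) • v := by
      rw [hA1, Matrix.add_mulVec, one_mulVec] at hAv
      rw [sub_smul, one_smul, ← hAv]
      abel
    have hMH : (U.map f)ᴴ * (U.map f) = 1 := by
      have hT : (U.map f)ᴴ = Uᵀ.map f := by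
        ext i j
        simp [hf, Matrix.conjTranspose_apply, Matrix.map_apply, Complex.conj_ofReal]
      rw [hT, ← Matrix.map_mul, hU, Matrix.map_one _ (map_zero f) (map_one f)]
    have h1 := abs_eq_one_aux (U.map f) hMH (ρ - 1) v hv hUv
    calc ‖ρ‖ = ‖(ρ - 1) + 1‖ := by congr 1; ring
      _ ≤ ‖ρ - 1‖ + ‖(1 : ℂ)‖ := norm_add_le _ _
      _ = 2 := by rw [h1]; norm_num
  -- the product over the other roots is at most 2^(n-1)
  have herase : ((A.charpoly.roots.erase μ).map (fun z : ℂ => ‖z‖)).prod ≤ 2 ^ (n - 1) := by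
    have hb : ∀ x ∈ (A.charpoly.roots.erase μ).map (fun z : ℂ => ‖z‖), 0 ≤ x ∧ x ≤ 2 := by
      intro x hx
      obtain ⟨ρ, hρ, rfl⟩ := Multiset.mem_map.mp hx
      exact ⟨norm_nonneg ρ, habs_bound ρ (Multiset.mem_of_mem_erase hρ)⟩
    have := multiset_prod_le_pow_card_aux hb
    rwa [Multiset.card_map, Multiset.card_erase_of_mem hmem, hcard] at this
  have habsdet : 1 ≤ ‖A.det‖ := by
    rw [hdetA, hfcoe, Complex.norm_real, Real.norm_eq_abs]
    exact hdet
  have hμabs : 1 ≤ ‖μ‖ * 2 ^ (n - 1) := by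
    have h1 : ‖A.det‖
        = ‖μ‖ * ((A.charpoly.roots.erase μ).map (fun z : ℂ => ‖z‖)).prod := by
      conv_lhs => rw [hprod, hcons]
      rw [Multiset.prod_cons, norm_mul]; congr 1; exact map_multiset_prod (normHom (α := ℂ)) _
    calc (1 : ℝ) ≤ ‖A.det‖ := habsdet
      _ = ‖μ‖ * ((A.charpoly.roots.erase μ).map (fun z : ℂ => ‖z‖)).prod := h1
      _ ≤ ‖μ‖ * 2 ^ (n - 1) :=
        mul_le_mul_of_nonneg_left herase (norm_nonneg μ)
  have hμpos : 0 < ‖μ‖ := norm_pos_iff.mpr hmu0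
  have hlabs : ‖lam‖ = ‖μ‖⁻¹ := by
    rw [hμdef, norm_inv, inv_inv]
  rw [hlabs, inv_eq_one_div, div_le_iff₀ hμpos]
  linarith [hμabs]
end

section
/- For every real orthogonal n×n matrix U there exists a diagonal signature matrix D such that DU + I is invertible and every complex eigenvalue of the Cayley transform C(DU) = (I - DU)(I + DU)⁻¹ has absolute value at most 1 + 2^n. -/
open Matrix Polynomial

lemma aux_eval_charpoly {m : Type*} [Fintype m] [DecidableEq m] {R : Type*} [CommRing R]
    (M : Matrix m m R) (mu : R) :
    M.charpoly.eval mu = (Matrix.diagonal (fun _ => mu) - M).det := by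
  rw [Matrix.charpoly, ← Polynomial.coe_evalRingHom, RingHom.map_det]
  congr 1
  ext i j
  by_cases h : i = j
  · subst h; simp [Matrix.charmatrix_apply_eq]
  · simp [Matrix.charmatrix_apply_ne _ _ _ h, Matrix.diagonal_apply_ne _ h]

lemma aux_diag_mulVec {m : Type*} [Fintype m] [DecidableEq m] (mu : ℂ) (v : m → ℂ) :
    Matrix.diagonal (fun _ => mu) *ᵥ v = mu • v := by
  ext i; simp [Matrix.mulVec_diagonal, Pi.smul_apply]

lemma aux_root_eigen {m : Type*} [Fintype m] [DecidableEq m]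
    {M : Matrix m m ℂ} {mu : ℂ} (h : M.charpoly.IsRoot mu) :
    ∃ v : m → ℂ, v ≠ 0 ∧ M *ᵥ v = mu • v := by
  have h0 : (Matrix.diagonal (fun _ => mu) - M).det = 0 := by
    rw [← aux_eval_charpoly]; exact h
  obtain ⟨v, hv, hmv⟩ := (Matrix.exists_mulVec_eq_zero_iff).2 h0
  refine ⟨v, hv, ?_⟩
  have h1 : Matrix.diagonal (fun _ => mu) *ᵥ v - M *ᵥ v = 0 := by
    rw [← Matrix.sub_mulVec]; exact hmv
  rw [aux_diag_mulVec] at h1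
  exact (sub_eq_zero.mp h1).symm

lemma aux_eigen_root {m : Type*} [Fintype m] [DecidableEq m]
    {M : Matrix m m ℂ} {mu : ℂ} {v : m → ℂ} (hv : v ≠ 0) (h : M *ᵥ v = mu • v) :
    M.charpoly.IsRoot mu := by
  have h0 : (Matrix.diagonal (fun _ => mu) - M) *ᵥ v = 0 := by
    rw [Matrix.sub_mulVec, aux_diag_mulVec, h, sub_self]
  have := (Matrix.exists_mulVec_eq_zero_iff).1 ⟨v, hv, h0⟩
  rwa [Polynomial.IsRoot, aux_eval_charpoly]

lemma aux_unitary_eig {m : Type*} [Fintype m] [DecidableEq m]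
    {M : Matrix m m ℂ} (hM : Mᴴ * M = 1) {v : m → ℂ} (hv : v ≠ 0) {nu : ℂ}
    (h : M *ᵥ v = nu • v) : ‖nu‖ = 1 := by
  have key : star (M *ᵥ v) ⬝ᵥ (M *ᵥ v) = star v ⬝ᵥ v := by
    rw [Matrix.star_mulVec, Matrix.dotProduct_mulVec, Matrix.vecMul_vecMul, hM,
      Matrix.vecMul_one]
  rw [h] at key
  have h2 : star (nu • v) ⬝ᵥ (nu • v) = (star nu * nu) * (star v ⬝ᵥ v) := by
    rw [star_smul, smul_dotProduct, dotProduct_smul, smul_eq_mul, smul_eq_mul]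
    ring
  rw [h2] at key
  have hvv : star v ⬝ᵥ v ≠ 0 := by
    open scoped ComplexOrder in
    rwa [Ne, dotProduct_star_self_eq_zero]
  have h3 : star nu * nu = 1 := by
    have : (star nu * nu) * (star v ⬝ᵥ v) = 1 * (star v ⬝ᵥ v) := by rw [one_mul]; exact key
    exact mul_right_cancel₀ hvv this
  have habs : ((Complex.normSq nu : ℂ)) = 1 := by
    rw [Complex.normSq_eq_conj_mul_self]; exact h3
  have habs2 : Complex.normSq nu = 1 := by exact_mod_cast habs
  have := Complex.sq_norm nu
  nlinarith [norm_nonneg nu]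

lemma aux_prod_le {t : Multiset ℂ} (h : ∀ x ∈ t, ‖x‖ ≤ 2) :
    ‖t.prod‖ ≤ 2 ^ (Multiset.card t) := by
  induction t using Multiset.induction_on with
  | empty => simp
  | cons a s ih =>
    simp only [Multiset.prod_cons, Multiset.card_cons, norm_mul]
    calc ‖a‖ * ‖s.prod‖ ≤ 2 * 2 ^ (Multiset.card s) := by
          exact mul_le_mul (h a (Multiset.mem_cons_self a s)) (ih fun x hx => h x (Multiset.mem_cons_of_mem hx)) (norm_nonneg _) (by norm_num)
      _ = 2 ^ (Multiset.card s + 1) := by ring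

lemma aux_exists_sign (n : ℕ) (U : Matrix (Fin n) (Fin n) ℝ) :
    ∃ d : Fin n → ℝ, (∀ i, d i = -1 ∨ d i = 1) ∧
      1 ≤ |(Matrix.diagonal d * U + 1).det| := by
  classical
  set S : Finset ℝ := {-1, 1} with hS
  set f := (Matrix.detRowAlternating (R := ℝ) (n := Fin n)).toMultilinearMap with hf
  have hrow : ∀ r : Fin n → ℝ, f (fun i => r i • U i + (1 : Matrix (Fin n) (Fin n) ℝ) i)
      = (Matrix.diagonal r * U + 1).det := by
    intro r
    have : (fun i => r i • U i + (1 : Matrix (Fin n) (Fin n) ℝ) i)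
        = fun i => (Matrix.diagonal r * U + 1 : Matrix (Fin n) (Fin n) ℝ) i := by
      funext i j
      simp [Matrix.diagonal_mul, Matrix.add_apply, Pi.smul_apply, smul_eq_mul]
    rw [this]
    rfl
  have key : ∑ r ∈ Fintype.piFinset (fun _ : Fin n => S),
      (Matrix.diagonal r * U + 1).det = (2 : ℝ) ^ n := by
    have h1 := f.map_sum_finset
      (fun i (s : ℝ) => s • U i + (1 : Matrix (Fin n) (Fin n) ℝ) i) (fun _ => S)
    have h2 : ∀ i : Fin n, ∑ s ∈ S, (s • U i + (1 : Matrix (Fin n) (Fin n) ℝ) i)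
        = (2 : ℝ) • (1 : Matrix (Fin n) (Fin n) ℝ) i := by
      intro i
      rw [hS, Finset.sum_pair (by norm_num : (-1 : ℝ) ≠ 1)]
      module
    calc ∑ r ∈ Fintype.piFinset (fun _ : Fin n => S), (Matrix.diagonal r * U + 1).det
        = ∑ r ∈ Fintype.piFinset (fun _ : Fin n => S),
            f (fun i => r i • U i + (1 : Matrix (Fin n) (Fin n) ℝ) i) :=
          Finset.sum_congr rfl fun r _ => (hrow r).symm
      _ = f (fun i => ∑ s ∈ S, (s • U i + (1 : Matrix (Fin n) (Fin n) ℝ) i)) := h1.symm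
      _ = f (fun i => (2 : ℝ) • (1 : Matrix (Fin n) (Fin n) ℝ) i) := by
          congr 1; funext i; exact h2 i
      _ = (∏ _i : Fin n, (2 : ℝ)) • f (fun i => (1 : Matrix (Fin n) (Fin n) ℝ) i) :=
          f.map_smul_univ _ _
      _ = (2 : ℝ) ^ n := by
          have : f (fun i => (1 : Matrix (Fin n) (Fin n) ℝ) i)
              = (1 : Matrix (Fin n) (Fin n) ℝ).det := rfl
          rw [this, Matrix.det_one]
          simp
  by_contra hcon
  push_neg at hcon
  have hmem : ∀ r ∈ Fintype.piFinset (fun _ : Fin n => S), ∀ i, r i = -1 ∨ r i = 1 := by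
    intro r hr i
    have := Fintype.mem_piFinset.mp hr i
    rw [hS] at this
    rcases Finset.mem_insert.mp this with h | h
    · exact Or.inl h
    · exact Or.inr (Finset.mem_singleton.mp h)
  have hcard : (Fintype.piFinset (fun _ : Fin n => S)).card = 2 ^ n := by
    rw [Fintype.card_piFinset]
    have : S.card = 2 := by
      rw [hS, Finset.card_insert_of_notMem (by norm_num), Finset.card_singleton]
    simp [this]
  have hlt : |∑ r ∈ Fintype.piFinset (fun _ : Fin n => S),
      (Matrix.diagonal r * U + 1).det| < 2 ^ n := by
    calc |∑ r ∈ Fintype.piFinset (fun _ : Fin n => S), (Matrix.diagonal r * U + 1).det|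
        ≤ ∑ r ∈ Fintype.piFinset (fun _ : Fin n => S), |(Matrix.diagonal r * U + 1).det| :=
          Finset.abs_sum_le_sum_abs _ _
      _ < ∑ _r ∈ Fintype.piFinset (fun _ : Fin n => S), (1 : ℝ) := by
          apply Finset.sum_lt_sum_of_nonempty
          · exact ⟨fun _ => 1, Fintype.mem_piFinset.mpr fun i => by simp [hS]⟩
          · intro r hr
            exact hcon r (hmem r hr)
      _ = 2 ^ n := by rw [Finset.sum_const, hcard]; simp
  rw [key] at hlt
  simp [abs_of_nonneg (by positivity : (0:ℝ) ≤ (2:ℝ)^n)] at hlt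

theorem stmt_12 (n : ℕ) (U : Matrix (Fin n) (Fin n) ℝ) (hU : Uᵀ * U = 1) :
    ∃ d : Fin n → ℝ, (∀ i, d i = -1 ∨ d i = 1) ∧
      (Matrix.diagonal d * U + 1).det ≠ 0 ∧
      ∀ lam : ℂ,
        (Matrix.charpoly
          (((1 - Matrix.diagonal d * U) * (1 + Matrix.diagonal d * U)⁻¹).map
            (algebraMap ℝ ℂ))).IsRoot lam →
        ‖lam‖ ≤ 1 + 2 ^ n := by
  classical
  obtain ⟨d, hd, hdet⟩ := aux_exists_sign n U
  set V : Matrix (Fin n) (Fin n) ℝ := Matrix.diagonal d * U with hV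
  have hdd : Matrix.diagonal d * Matrix.diagonal d = 1 := by
    rw [Matrix.diagonal_mul_diagonal]
    have hd2 : (fun i => d i * d i) = fun _ => (1 : ℝ) := by
      funext i; rcases hd i with h | h <;> simp [h]
    rw [hd2, Matrix.diagonal_one]
  have hVo : Vᵀ * V = 1 := by
    rw [hV, Matrix.transpose_mul, Matrix.diagonal_transpose, Matrix.mul_assoc,
      ← Matrix.mul_assoc (Matrix.diagonal d), hdd, Matrix.one_mul, hU]
  have hdetV : (V + 1).det ≠ 0 := by
    intro h; rw [h] at hdet; norm_num at hdet
  have hA1 : (1 + V).det ≠ 0 := by rwa [add_comm] at hdetV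
  have hA1u : IsUnit (1 + V).det := hA1.isUnit
  refine ⟨d, hd, hdetV, ?_⟩
  intro lam hroot
  set Vc : Matrix (Fin n) (Fin n) ℂ := V.map (algebraMap ℝ ℂ) with hVc
  set Ac : Matrix (Fin n) (Fin n) ℂ := (1 + V).map (algebraMap ℝ ℂ) with hAc'
  have hAcdet : Ac.det = (algebraMap ℝ ℂ) (1 + V).det := ((algebraMap ℝ ℂ).map_det _).symm
  have hAcdet0 : Ac.det ≠ 0 := by
    rw [hAcdet]
    simp only [Complex.coe_algebraMap, ne_eq, Complex.ofReal_eq_zero]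
    exact hA1
  have hAcu : IsUnit Ac.det := hAcdet0.isUnit
  have hmapinv : Ac⁻¹ = ((1 + V)⁻¹).map (algebraMap ℝ ℂ) := by
    apply Matrix.inv_eq_right_inv
    rw [hAc', ← Matrix.map_mul, Matrix.mul_nonsing_inv _ hA1u,
      Matrix.map_one _ (map_zero _) (map_one _)]
  have hBc : (1 - V).map (algebraMap ℝ ℂ) = 1 - Vc := by
    ext i j
    by_cases h : i = j <;>
      simp [h, Matrix.map_apply, Matrix.sub_apply, Matrix.one_apply, hVc]
  have hAc : Ac = 1 + Vc := by
    ext i j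
    by_cases h : i = j <;>
      simp [h, hAc', Matrix.map_apply, Matrix.add_apply, Matrix.one_apply, hVc]
  obtain ⟨x, hx0, hx⟩ := aux_root_eigen hroot
  set y : Fin n → ℂ := Ac⁻¹ *ᵥ x with hy
  have hxy : Ac *ᵥ y = x := by
    rw [hy, Matrix.mulVec_mulVec, Matrix.mul_nonsing_inv _ hAcu, Matrix.one_mulVec]
  have hy0 : y ≠ 0 := by
    intro h; apply hx0; rw [← hxy, h, Matrix.mulVec_zero]
  have heq : (1 - Vc) *ᵥ y = lam • ((1 + Vc) *ᵥ y) := by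
    have h6 := hx
    rw [Matrix.map_mul, hBc, hmapinv.symm, ← Matrix.mulVec_mulVec, ← hy, ← hxy, hAc] at h6
    exact h6
  have hVcU : Vcᴴ * Vc = 1 := by
    have hct : Vcᴴ = (Vᵀ).map (algebraMap ℝ ℂ) := by
      ext i j
      simp [Matrix.conjTranspose_apply, Matrix.map_apply, hVc, Complex.coe_algebraMap,
        Complex.conj_ofReal]
    rw [hct, ← Matrix.map_mul, hVo, Matrix.map_one _ (map_zero _) (map_one _)]
  -- case lam = -1
  rcases eq_or_ne lam (-1) with hlam | hlam
  · rw [hlam]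
    have h1 : ‖(-1 : ℂ)‖ = 1 := by simp
    rw [h1]
    have : (0:ℝ) ≤ 2 ^ n := by positivity
    linarith
  · have h1lam : (1 : ℂ) + lam ≠ 0 := by
      intro h; apply hlam; linear_combination h
    set nu : ℂ := (1 - lam) / (1 + lam) with hnudef
    have heq2 : (1 - lam) • y = (1 + lam) • (Vc *ᵥ y) := by
      rw [Matrix.sub_mulVec, Matrix.add_mulVec, Matrix.one_mulVec, smul_add] at heq
      have h3 : (1 - lam) • y - (1 + lam) • (Vc *ᵥ y)
          = (y - Vc *ᵥ y) - (lam • y + lam • (Vc *ᵥ y)) := by module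
      rw [heq, sub_self] at h3
      exact sub_eq_zero.mp h3
    have hVy : Vc *ᵥ y = nu • y := by
      have h4 : ((1 + lam)⁻¹ * (1 - lam)) • y = ((1 + lam)⁻¹ * (1 + lam)) • (Vc *ᵥ y) := by
        rw [← smul_smul, ← smul_smul, heq2]
      rw [inv_mul_cancel₀ h1lam, one_smul] at h4
      rw [← h4]
      congr 1
      rw [hnudef]
      field_simp
    have hnu : ‖nu‖ = 1 := aux_unitary_eig hVcU hy0 hVy
    have hAy : Ac *ᵥ y = (1 + nu) • y := by
      rw [hAc, Matrix.add_mulVec, Matrix.one_mulVec, hVy]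
      module
    have hchne : Ac.charpoly ≠ 0 := (Matrix.charpoly_monic Ac).ne_zero
    have hmem : (1 + nu) ∈ Ac.charpoly.roots := by
      rw [Polynomial.mem_roots hchne]
      exact aux_eigen_root hy0 hAy
    obtain ⟨t, ht⟩ := Multiset.exists_cons_of_mem hmem
    have hrootsle : ∀ ρ ∈ Ac.charpoly.roots, ‖ρ‖ ≤ 2 := by
      intro ρ hρ
      obtain ⟨z, hz0, hz⟩ := aux_root_eigen ((Polynomial.mem_roots hchne).mp hρ)
      have hVz : Vc *ᵥ z = (ρ - 1) • z := by
        rw [hAc, Matrix.add_mulVec, Matrix.one_mulVec] at hz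
        have h7 : Vc *ᵥ z - (ρ - 1) • z = (z + Vc *ᵥ z) - ρ • z := by module
        rw [hz, sub_self] at h7
        exact sub_eq_zero.mp h7
      have h8 := aux_unitary_eig hVcU hz0 hVz
      calc ‖ρ‖ = ‖(ρ - 1) + 1‖ := by ring_nf
        _ ≤ ‖ρ - 1‖ + ‖(1 : ℂ)‖ := norm_add_le _ _
        _ = 2 := by rw [h8]; norm_num
    have hcard : Multiset.card Ac.charpoly.roots ≤ n := by
      have h5 := Polynomial.card_roots' Ac.charpoly
      rwa [Matrix.charpoly_natDegree_eq_dim, Fintype.card_fin] at h5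
    have htcard : Multiset.card t + 1 ≤ n := by
      rw [ht] at hcard; simpa using hcard
    have htprod : ‖t.prod‖ ≤ 2 ^ (Multiset.card t) :=
      aux_prod_le (fun xx hxx => hrootsle xx (ht ▸ Multiset.mem_cons_of_mem hxx))
    have hdetabs : (1:ℝ) ≤ ‖Ac.det‖ := by
      rw [hAcdet]
      simp only [Complex.coe_algebraMap, Complex.norm_real, Real.norm_eq_abs]
      rwa [add_comm]
    have hdetprod : Ac.det = Ac.charpoly.roots.prod := Matrix.det_eq_prod_roots_charpoly Ac
    have hdp : ‖Ac.det‖ = ‖1 + nu‖ * ‖t.prod‖ := by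
      rw [hdetprod, ht, Multiset.prod_cons, norm_mul]
    have h6 : (1:ℝ) ≤ ‖1 + nu‖ * 2 ^ (Multiset.card t) := by
      calc (1:ℝ) ≤ ‖Ac.det‖ := hdetabs
        _ = ‖1 + nu‖ * ‖t.prod‖ := hdp
        _ ≤ ‖1 + nu‖ * 2 ^ (Multiset.card t) := by
            exact mul_le_mul_of_nonneg_left htprod (norm_nonneg _)
    have hlmu : lam * (1 + nu) = 1 - nu := by
      rw [hnudef]; field_simp; ring
    have h7 : ‖lam‖ * ‖1 + nu‖ ≤ 2 := by
      rw [← norm_mul, hlmu]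
      calc ‖1 - nu‖ ≤ ‖(1 : ℂ)‖ + ‖-nu‖ := by
            rw [sub_eq_add_neg]; exact norm_add_le _ _
        _ = 2 := by rw [norm_neg, hnu]; norm_num
    -- conclude
    have ha0 : (0:ℝ) < ‖1 + nu‖ := by
      rcases lt_or_ge 0 (‖1 + nu‖) with h | h
      · exact h
      · exfalso
        have : ‖1 + nu‖ * 2 ^ (Multiset.card t) ≤ 0 := by
          apply mul_nonpos_of_nonpos_of_nonneg h (by positivity)
        linarith
    have hP : (0:ℝ) < 2 ^ (Multiset.card t) := by positivity
    have hstep : ‖lam‖ ≤ 2 * 2 ^ (Multiset.card t) := by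
      nlinarith [norm_nonneg lam]
    have hstep2 : (2:ℝ) * 2 ^ (Multiset.card t) ≤ 2 ^ n := by
      have : (2:ℝ) * 2 ^ (Multiset.card t) = 2 ^ (Multiset.card t + 1) := by ring
      rw [this]
      exact pow_le_pow_right₀ (by norm_num) htcard
    have : (0:ℝ) ≤ 1 := by norm_num
    linarith
end
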